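/- arXiv:1411.6207 — 5 statements merged into one kernel-verified Lean document; each statement's English description precedes it below -/
import Mathlib

section
/- A vector field ζ on a Riemannian manifold (M,g) is 2-Killing if and only if g(D_ζ D_X ζ − D_{[ζ,X]} ζ, X) + g(D_X ζ, D_X ζ) = 0 for every vector field X. -/
/-- Abstract calculus of vector fields on a manifold with point set `M`:
smooth real-valued functions are modelled by `M → ℝ`, vector fields by `V`.
`g` is the (pseudo-)Riemannian metric, `D` its Levi-Civita connection,
`bracket` the Lie bracket, and `act X a` the derivative `X(a)` of a function
along a vector field. -/
structure VFC (M : Type) (V : Type) [AddCommGroup V] [Module (M → ℝ) V] where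
  g : V → V → M → ℝ
  D : V → V → V
  bracket : V → V → V
  act : V → (M → ℝ) → (M → ℝ)
  g_symm : ∀ X Y, g X Y = g Y X
  g_addl : ∀ X Y Z, g (X + Y) Z = g X Z + g Y Z
  g_smull : ∀ (a : M → ℝ) (X Y : V), g (a • X) Y = a * g X Y
  act_add : ∀ X a b, act X (a + b) = act X a + act X b
  act_mul : ∀ X a b, act X (a * b) = act X a * b + a * act X b
  act_addl : ∀ X Y a, act (X + Y) a = act X a + act Y a
  act_smull : ∀ (c : M → ℝ) X a, act (c • X) a = c * act X a
  compat : ∀ X Y Z, act X (g Y Z) = g (D X Y) Z + g Y (D X Z)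
  torsion : ∀ X Y, D X Y - D Y X = bracket X Y
  D_addl : ∀ X Y Z, D (X + Y) Z = D X Z + D Y Z
  D_addr : ∀ X Y Z, D X (Y + Z) = D X Y + D X Z
  D_smull : ∀ (a : M → ℝ) X Y, D (a • X) Y = a • D X Y
  D_leib : ∀ (a : M → ℝ) X Y, D X (a • Y) = act X a • Y + a • D X Y

namespace VFC
variable {M V : Type} [AddCommGroup V] [Module (M → ℝ) V]

/-- Lie derivative of a (0,2)-tensor `T` along `ζ`. -/
def lieT (Γ : VFC M V) (ζ : V) (T : V → V → M → ℝ) : V → V → M → ℝ :=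
  fun X Y => Γ.act ζ (T X Y) - T (Γ.bracket ζ X) Y - T X (Γ.bracket ζ Y)

/-- Lie derivative `L_ζ g` of the metric. -/
def lieg (Γ : VFC M V) (ζ : V) : V → V → M → ℝ := Γ.lieT ζ Γ.g

/-- Second Lie derivative `L_ζ L_ζ g` of the metric. -/
def lie2g (Γ : VFC M V) (ζ : V) : V → V → M → ℝ := Γ.lieT ζ (Γ.lieg ζ)

/-- `ζ` is a Killing vector field: `L_ζ g = 0`. -/
def IsKilling (Γ : VFC M V) (ζ : V) : Prop := ∀ X Y, Γ.lieg ζ X Y = 0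

/-- `ζ` is a 2-Killing vector field: `L_ζ L_ζ g = 0`. -/
def Is2Killing (Γ : VFC M V) (ζ : V) : Prop := ∀ X Y, Γ.lie2g ζ X Y = 0

/-- Riemann curvature `R(X,Y)Z = D_X D_Y Z − D_Y D_X Z − D_{[X,Y]} Z`. -/
def R (Γ : VFC M V) (X Y Z : V) : V :=
  Γ.D X (Γ.D Y Z) - Γ.D Y (Γ.D X Z) - Γ.D (Γ.bracket X Y) Z

end VFC

section Aux
variable {M V : Type} [AddCommGroup V] [Module (M → ℝ) V]

lemma aux_g_addr (Γ : VFC M V) (X Y Z : V) : Γ.g X (Y + Z) = Γ.g X Y + Γ.g X Z := by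
  rw [Γ.g_symm, Γ.g_addl, Γ.g_symm Y X, Γ.g_symm Z X]

lemma aux_g_negl (Γ : VFC M V) (X Y : V) : Γ.g (-X) Y = -Γ.g X Y := by
  rw [← neg_one_smul (M → ℝ) X, Γ.g_smull]; ring

lemma aux_g_subl (Γ : VFC M V) (X Y Z : V) : Γ.g (X - Y) Z = Γ.g X Z - Γ.g Y Z := by
  rw [sub_eq_add_neg, Γ.g_addl, aux_g_negl]; ring

lemma aux_g_subr (Γ : VFC M V) (X Y Z : V) : Γ.g X (Y - Z) = Γ.g X Y - Γ.g X Z := by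
  rw [Γ.g_symm, aux_g_subl, Γ.g_symm Y X, Γ.g_symm Z X]

lemma aux_bracket_eq (Γ : VFC M V) (X Y : V) :
    Γ.bracket X Y = Γ.D X Y - Γ.D Y X := (Γ.torsion X Y).symm

lemma aux_lieg_eq (Γ : VFC M V) (ζ X Y : V) :
    Γ.lieg ζ X Y = Γ.g (Γ.D X ζ) Y + Γ.g X (Γ.D Y ζ) := by
  unfold VFC.lieg VFC.lieT
  rw [Γ.compat, aux_bracket_eq, aux_bracket_eq, aux_g_subl, aux_g_subr]
  ring

lemma aux_lie2g_eq (Γ : VFC M V) (ζ X Y : V) :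
    Γ.lie2g ζ X Y =
      Γ.g (Γ.D ζ (Γ.D X ζ) - Γ.D (Γ.bracket ζ X) ζ) Y
      + Γ.g X (Γ.D ζ (Γ.D Y ζ) - Γ.D (Γ.bracket ζ Y) ζ)
      + 2 * Γ.g (Γ.D X ζ) (Γ.D Y ζ) := by
  show Γ.act ζ (Γ.lieg ζ X Y) - Γ.lieg ζ (Γ.bracket ζ X) Y - Γ.lieg ζ X (Γ.bracket ζ Y) = _
  rw [aux_lieg_eq, aux_lieg_eq, aux_lieg_eq, Γ.act_add, Γ.compat, Γ.compat]
  simp only [aux_bracket_eq, aux_g_subl, aux_g_subr]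
  ring

end Aux

/-- `ζ` is 2-Killing iff
`g(D_ζ D_X ζ − D_{[ζ,X]}ζ, X) + g(D_X ζ, D_X ζ) = 0` for every `X`. -/
theorem two_killing_iff_symm {M V : Type} [AddCommGroup V] [Module (M → ℝ) V]
    (Γ : VFC M V) (ζ : V) :
    Γ.Is2Killing ζ ↔ ∀ X,
      (fun p => Γ.g (Γ.D ζ (Γ.D X ζ) - Γ.D (Γ.bracket ζ X) ζ) X p
        + Γ.g (Γ.D X ζ) (Γ.D X ζ) p) = (0 : M → ℝ) := by
  constructor
  · intro h X
    have hx := h X X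
    rw [aux_lie2g_eq] at hx
    rw [Γ.g_symm X (Γ.D ζ (Γ.D X ζ) - Γ.D (Γ.bracket ζ X) ζ)] at hx
    funext p
    have := congrFun hx p
    simp only [Pi.add_apply, Pi.mul_apply, Pi.sub_apply, Pi.zero_apply, Pi.ofNat_apply] at this ⊢
    push_cast at this
    linarith
  · intro h X Y
    have hX : Γ.g (Γ.D ζ (Γ.D X ζ) - Γ.D (Γ.bracket ζ X) ζ) X
        + Γ.g (Γ.D X ζ) (Γ.D X ζ) = 0 := by
      funext p; exact congrFun (h X) p
    have hY : Γ.g (Γ.D ζ (Γ.D Y ζ) - Γ.D (Γ.bracket ζ Y) ζ) Y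
        + Γ.g (Γ.D Y ζ) (Γ.D Y ζ) = 0 := by
      funext p; exact congrFun (h Y) p
    have hXY : Γ.g (Γ.D ζ (Γ.D (X + Y) ζ) - Γ.D (Γ.bracket ζ (X + Y)) ζ) (X + Y)
        + Γ.g (Γ.D (X + Y) ζ) (Γ.D (X + Y) ζ) = 0 := by
      funext p; exact congrFun (h (X + Y)) p
    have hb : Γ.bracket ζ (X + Y) = Γ.bracket ζ X + Γ.bracket ζ Y := by
      rw [aux_bracket_eq, aux_bracket_eq, aux_bracket_eq, Γ.D_addr, Γ.D_addl]; abel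
    have hE : Γ.D ζ (Γ.D (X + Y) ζ) - Γ.D (Γ.bracket ζ (X + Y)) ζ
        = (Γ.D ζ (Γ.D X ζ) - Γ.D (Γ.bracket ζ X) ζ)
          + (Γ.D ζ (Γ.D Y ζ) - Γ.D (Γ.bracket ζ Y) ζ) := by
      rw [hb, Γ.D_addl, Γ.D_addl, Γ.D_addr]; abel
    rw [hE, Γ.D_addl, Γ.g_addl, aux_g_addr, aux_g_addr, Γ.g_addl, aux_g_addr,
      aux_g_addr] at hXY
    rw [Γ.g_symm (Γ.D Y ζ) (Γ.D X ζ),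
      Γ.g_symm (Γ.D ζ (Γ.D Y ζ) - Γ.D (Γ.bracket ζ Y) ζ) X] at hXY
    rw [aux_lie2g_eq]
    linear_combination hXY - hX - hY
end

section
/- A vector field ζ = u ∂_x + v ∂_y on the Euclidean plane (ℝ², dx² + dy²), with u a function of x only and v a function of y only, is 2-Killing if and only if u u'' + 2(u')² = 0 and v v'' + 2(v')² = 0. -/
/-- Derivative of a function on the Euclidean plane along a vector field. -/
noncomputable def eAct (X : ℝ × ℝ → ℝ × ℝ) (a : ℝ × ℝ → ℝ) : ℝ × ℝ → ℝ :=
  fun p => fderiv ℝ a p (X p)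

/-- Lie bracket of vector fields on the Euclidean plane. -/
noncomputable def eBracket (X Y : ℝ × ℝ → ℝ × ℝ) : ℝ × ℝ → ℝ × ℝ :=
  fun p => fderiv ℝ Y p (X p) - fderiv ℝ X p (Y p)

/-- The Euclidean metric `dx² + dy²` evaluated on two vector fields. -/
def eg (X Y : ℝ × ℝ → ℝ × ℝ) : ℝ × ℝ → ℝ :=
  fun p => (X p).1 * (Y p).1 + (X p).2 * (Y p).2

/-- Lie derivative of a (0,2)-tensor on the Euclidean plane along `ζ`. -/
noncomputable def eLieT (ζ : ℝ × ℝ → ℝ × ℝ)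
    (T : (ℝ × ℝ → ℝ × ℝ) → (ℝ × ℝ → ℝ × ℝ) → ℝ × ℝ → ℝ)
    (X Y : ℝ × ℝ → ℝ × ℝ) : ℝ × ℝ → ℝ :=
  fun p => eAct ζ (T X Y) p - T (eBracket ζ X) Y p - T X (eBracket ζ Y) p

open ContinuousLinearMap

lemma hfstD {u : ℝ → ℝ} (hu : Differentiable ℝ u) (p : ℝ × ℝ) :
    HasFDerivAt (fun q : ℝ × ℝ => u q.1) ((deriv u p.1) • fst ℝ ℝ ℝ) p :=
  HasDerivAt.comp_hasFDerivAt p ((hu p.1).hasDerivAt) hasFDerivAt_fst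

lemma hsndD {v : ℝ → ℝ} (hv : Differentiable ℝ v) (p : ℝ × ℝ) :
    HasFDerivAt (fun q : ℝ × ℝ => v q.2) ((deriv v p.2) • snd ℝ ℝ ℝ) p :=
  HasDerivAt.comp_hasFDerivAt p ((hv p.2).hasDerivAt) hasFDerivAt_snd

lemma hzeta {u v : ℝ → ℝ} (hu : ContDiff ℝ (⊤ : ℕ∞) u) (hv : ContDiff ℝ (⊤ : ℕ∞) v) (p : ℝ × ℝ) :
    HasFDerivAt (fun q : ℝ × ℝ => (u q.1, v q.2))
      (((deriv u p.1) • fst ℝ ℝ ℝ).prod ((deriv v p.2) • snd ℝ ℝ ℝ)) p :=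
  (hfstD (hu.differentiable (by simp)) p).prodMk (hsndD (hv.differentiable (by simp)) p)

lemma lie1 {u v : ℝ → ℝ} (hu : ContDiff ℝ (⊤ : ℕ∞) u) (hv : ContDiff ℝ (⊤ : ℕ∞) v)
    {X Y : ℝ × ℝ → ℝ × ℝ} {p : ℝ × ℝ}
    (hX : DifferentiableAt ℝ X p) (hY : DifferentiableAt ℝ Y p) :
    eLieT (fun q => (u q.1, v q.2)) eg X Y p =
      2 * deriv u p.1 * (X p).1 * (Y p).1 + 2 * deriv v p.2 * (X p).2 * (Y p).2 := by
  have hXf := hX.hasFDerivAt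
  have hYf := hY.hasFDerivAt
  have hg : HasFDerivAt (eg X Y)
      (((X p).1 • ((fst ℝ ℝ ℝ).comp (fderiv ℝ Y p)) + (Y p).1 • ((fst ℝ ℝ ℝ).comp (fderiv ℝ X p)))
        + ((X p).2 • ((snd ℝ ℝ ℝ).comp (fderiv ℝ Y p)) + (Y p).2 • ((snd ℝ ℝ ℝ).comp (fderiv ℝ X p)))) p :=
    (hXf.fst.mul hYf.fst).add (hXf.snd.mul hYf.snd)
  have hb : fderiv ℝ (fun q : ℝ × ℝ => (u q.1, v q.2)) p =
      ((deriv u p.1) • fst ℝ ℝ ℝ).prod ((deriv v p.2) • snd ℝ ℝ ℝ) := (hzeta hu hv p).fderiv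
  simp only [eLieT, eAct, eBracket, eg, hg.fderiv, hb, ContinuousLinearMap.add_apply,
    ContinuousLinearMap.smul_apply, ContinuousLinearMap.comp_apply, ContinuousLinearMap.prod_apply,
    ContinuousLinearMap.coe_fst', ContinuousLinearMap.coe_snd', smul_eq_mul,
    Prod.fst_sub, Prod.snd_sub]
  ring

lemma bracket_contDiff {Z X : ℝ × ℝ → ℝ × ℝ} (hZ : ContDiff ℝ (⊤ : ℕ∞) Z) (hX : ContDiff ℝ (⊤ : ℕ∞) X) :
    ContDiff ℝ (⊤ : ℕ∞) (eBracket Z X) := by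
  unfold eBracket
  exact ((hX.fderiv_right (by simp)).clm_apply hZ).sub ((hZ.fderiv_right (by simp)).clm_apply hX)

lemma lie2 {u v : ℝ → ℝ} (hu : ContDiff ℝ (⊤ : ℕ∞) u) (hv : ContDiff ℝ (⊤ : ℕ∞) v)
    {X Y : ℝ × ℝ → ℝ × ℝ} (hX : ContDiff ℝ (⊤ : ℕ∞) X) (hY : ContDiff ℝ (⊤ : ℕ∞) Y) (p : ℝ × ℝ) :
    eLieT (fun q => (u q.1, v q.2)) (eLieT (fun q => (u q.1, v q.2)) eg) X Y p =
      2 * (u p.1 * deriv (deriv u) p.1 + 2 * (deriv u p.1) ^ 2) * (X p).1 * (Y p).1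
        + 2 * (v p.2 * deriv (deriv v) p.2 + 2 * (deriv v p.2) ^ 2) * (X p).2 * (Y p).2 := by
  set ζ : ℝ × ℝ → ℝ × ℝ := fun q => (u q.1, v q.2) with hζdef
  have hζc : ContDiff ℝ (⊤ : ℕ∞) ζ := (hu.comp contDiff_fst).prodMk (hv.comp contDiff_snd)
  have hBX := bracket_contDiff hζc hX
  have hBY := bracket_contDiff hζc hY
  have hdu : Differentiable ℝ (deriv u) :=
    (contDiff_infty_iff_deriv.mp (hu.of_le (by simp))).2.differentiable (by simp)
  have hdv : Differentiable ℝ (deriv v) :=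
    (contDiff_infty_iff_deriv.mp (hv.of_le (by simp))).2.differentiable (by simp)
  have hXf := (hX.differentiable (by simp) p).hasFDerivAt
  have hYf := (hY.differentiable (by simp) p).hasFDerivAt
  -- rewrite inner tensor as explicit function
  have h1 : eLieT ζ eg X Y = fun q =>
      2 * deriv u q.1 * (X q).1 * (Y q).1 + 2 * deriv v q.2 * (X q).2 * (Y q).2 :=
    funext fun q => lie1 hu hv (hX.differentiable (by simp) q) (hY.differentiable (by simp) q)
  -- derivative of the inner tensor function
  have hg : HasFDerivAt (fun q : ℝ × ℝ =>
      2 * deriv u q.1 * (X q).1 * (Y q).1 + 2 * deriv v q.2 * (X q).2 * (Y q).2)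
      (((2 * deriv u p.1 * (X p).1) • ((fst ℝ ℝ ℝ).comp (fderiv ℝ Y p))
          + (Y p).1 • ((2 * deriv u p.1) • ((fst ℝ ℝ ℝ).comp (fderiv ℝ X p))
              + (X p).1 • ((2:ℝ) • ((deriv (deriv u) p.1) • fst ℝ ℝ ℝ))))
        + ((2 * deriv v p.2 * (X p).2) • ((snd ℝ ℝ ℝ).comp (fderiv ℝ Y p))
          + (Y p).2 • ((2 * deriv v p.2) • ((snd ℝ ℝ ℝ).comp (fderiv ℝ X p))
              + (X p).2 • ((2:ℝ) • ((deriv (deriv v) p.2) • snd ℝ ℝ ℝ))))) p := by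
    exact ((((hfstD hdu p).const_mul 2).mul hXf.fst).mul hYf.fst).add
      ((((hsndD hdv p).const_mul 2).mul hXf.snd).mul hYf.snd)
  have hbz : fderiv ℝ ζ p = ((deriv u p.1) • fst ℝ ℝ ℝ).prod ((deriv v p.2) • snd ℝ ℝ ℝ) :=
    (hzeta hu hv p).fderiv
  have hTBX : eLieT ζ eg (eBracket ζ X) Y p =
      2 * deriv u p.1 * (eBracket ζ X p).1 * (Y p).1
        + 2 * deriv v p.2 * (eBracket ζ X p).2 * (Y p).2 :=
    lie1 hu hv (hBX.differentiable (by simp) p) (hY.differentiable (by simp) p)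
  have hTBY : eLieT ζ eg X (eBracket ζ Y) p =
      2 * deriv u p.1 * (X p).1 * (eBracket ζ Y p).1
        + 2 * deriv v p.2 * (X p).2 * (eBracket ζ Y p).2 :=
    lie1 hu hv (hX.differentiable (by simp) p) (hBY.differentiable (by simp) p)
  show eAct ζ (eLieT ζ eg X Y) p - eLieT ζ eg (eBracket ζ X) Y p
      - eLieT ζ eg X (eBracket ζ Y) p = _
  rw [hTBX, hTBY, h1]
  simp only [eAct, eBracket, hg.fderiv, hbz, ContinuousLinearMap.add_apply,
    ContinuousLinearMap.smul_apply, ContinuousLinearMap.comp_apply,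
    ContinuousLinearMap.prod_apply, ContinuousLinearMap.coe_fst', ContinuousLinearMap.coe_snd',
    smul_eq_mul, Prod.fst_sub, Prod.snd_sub]
  ring

/-- `ζ = u ∂_x + v ∂_y` (with `u = u(x)`, `v = v(y)`) is
2-Killing on the Euclidean plane iff `u u'' + 2 u'² = 0` and `v v'' + 2 v'² = 0`. -/
theorem euclidean_two_killing (u v : ℝ → ℝ)
    (hu : ContDiff ℝ (⊤ : ℕ∞) u) (hv : ContDiff ℝ (⊤ : ℕ∞) v) :
    (∀ X Y : ℝ × ℝ → ℝ × ℝ, ContDiff ℝ (⊤ : ℕ∞) X → ContDiff ℝ (⊤ : ℕ∞) Y →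
        eLieT (fun p => (u p.1, v p.2))
          (eLieT (fun p => (u p.1, v p.2)) eg) X Y = 0)
      ↔ (∀ x, u x * deriv (deriv u) x + 2 * (deriv u x) ^ 2 = 0)
        ∧ (∀ y, v y * deriv (deriv v) y + 2 * (deriv v y) ^ 2 = 0) := by
  constructor
  · intro H
    constructor
    · intro x
      have h := congrFun (H (fun _ => (1, 0)) (fun _ => (1, 0)) contDiff_const contDiff_const) (x, 0)
      rw [lie2 hu hv contDiff_const contDiff_const (x, 0)] at h
      simp at h
      linarith
    · intro y
      have h := congrFun (H (fun _ => (0, 1)) (fun _ => (0, 1)) contDiff_const contDiff_const) (0, y)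
      rw [lie2 hu hv contDiff_const contDiff_const (0, y)] at h
      simp at h
      linarith
  · rintro ⟨h1, h2⟩ X Y hX hY
    funext p
    rw [Pi.zero_apply, lie2 hu hv hX hY p, h1 p.1, h2 p.2]
    ring
end

section
/- For a vector field ζ = (ζ₁,ζ₂) on the warped product M₁ ×_f M₂ and any vector fields X = (X₁,X₂), Y = (Y₁,Y₂): (L_ζ L_ζ g)(X,Y) = (L¹_{ζ₁} L¹_{ζ₁} g₁)(X₁,Y₁) + f² (L²_{ζ₂} L²_{ζ₂} g₂)(X₂,Y₂) + 4 f ζ₁(f) (L²_{ζ₂} g₂)(X₂,Y₂) + 2 f ζ₁(ζ₁(f)) g₂(X₂,Y₂) + 2 (ζ₁(f))² g₂(X₂,Y₂). -/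
/-- The warped product `M₁ ×_f M₂` of two Riemannian manifolds, with metric
`g = g₁ ⊕ f² g₂`.  `L₁, L₂` are the lifts of vector fields on the factors,
functions on the factors are pulled back via the projections, and the fields
record the standard warped-product formulas for the metric, the action on
functions, Lie brackets of lifts, and the Levi-Civita connection
(O'Neill / Bishop–O'Neill). -/
structure Warped (M₁ V₁ M₂ V₂ V : Type)
    [AddCommGroup V₁] [Module (M₁ → ℝ) V₁]
    [AddCommGroup V₂] [Module (M₂ → ℝ) V₂]
    [AddCommGroup V] [Module (M₁ × M₂ → ℝ) V] where
  Γ₁ : VFC M₁ V₁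
  Γ₂ : VFC M₂ V₂
  Γ : VFC (M₁ × M₂) V
  f : M₁ → ℝ
  f_pos : ∀ p, 0 < f p
  L₁ : V₁ →+ V
  L₂ : V₂ →+ V
  gradf : V₁
  hgrad : ∀ Y₁, Γ₁.g gradf Y₁ = Γ₁.act Y₁ f
  metric : ∀ X₁ X₂ Y₁ Y₂, Γ.g (L₁ X₁ + L₂ X₂) (L₁ Y₁ + L₂ Y₂)
      = fun p => Γ₁.g X₁ Y₁ p.1 + (f p.1)^2 * Γ₂.g X₂ Y₂ p.2
  act₁ : ∀ X₁ (a : M₁ → ℝ), Γ.act (L₁ X₁) (fun p => a p.1) = fun p => Γ₁.act X₁ a p.1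
  act₂ : ∀ X₂ (b : M₂ → ℝ), Γ.act (L₂ X₂) (fun p => b p.2) = fun p => Γ₂.act X₂ b p.2
  act₁₂ : ∀ X₁ (b : M₂ → ℝ), Γ.act (L₁ X₁) (fun p => b p.2) = 0
  act₂₁ : ∀ X₂ (a : M₁ → ℝ), Γ.act (L₂ X₂) (fun p => a p.1) = 0
  br₁ : ∀ X₁ Y₁, Γ.bracket (L₁ X₁) (L₁ Y₁) = L₁ (Γ₁.bracket X₁ Y₁)
  br₂ : ∀ X₂ Y₂, Γ.bracket (L₂ X₂) (L₂ Y₂) = L₂ (Γ₂.bracket X₂ Y₂)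
  br₁₂ : ∀ X₁ Y₂, Γ.bracket (L₁ X₁) (L₂ Y₂) = 0
  conn₁ : ∀ X₁ Y₁, Γ.D (L₁ X₁) (L₁ Y₁) = L₁ (Γ₁.D X₁ Y₁)
  conn₁₂ : ∀ X₁ Y₂, Γ.D (L₁ X₁) (L₂ Y₂)
      = (fun p : M₁ × M₂ => Γ₁.act X₁ f p.1 / f p.1) • L₂ Y₂
  conn₂₁ : ∀ X₁ Y₂, Γ.D (L₂ Y₂) (L₁ X₁)
      = (fun p : M₁ × M₂ => Γ₁.act X₁ f p.1 / f p.1) • L₂ Y₂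
  conn₂ : ∀ X₂ Y₂, Γ.D (L₂ X₂) (L₂ Y₂)
      = L₂ (Γ₂.D X₂ Y₂) - (fun p : M₁ × M₂ => f p.1 * Γ₂.g X₂ Y₂ p.2) • L₁ gradf


namespace VFC
variable {M V : Type} [AddCommGroup V] [Module (M → ℝ) V]

lemma bracket_addl (Γ : VFC M V) (A B C : V) :
    Γ.bracket (A + B) C = Γ.bracket A C + Γ.bracket B C := by
  rw [← Γ.torsion, ← Γ.torsion, ← Γ.torsion, Γ.D_addl, Γ.D_addr]; abel

lemma bracket_addr (Γ : VFC M V) (A B C : V) :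
    Γ.bracket A (B + C) = Γ.bracket A B + Γ.bracket A C := by
  rw [← Γ.torsion, ← Γ.torsion, ← Γ.torsion, Γ.D_addl, Γ.D_addr]; abel

end VFC

namespace Warped
variable {M₁ V₁ M₂ V₂ V : Type}
    [AddCommGroup V₁] [Module (M₁ → ℝ) V₁]
    [AddCommGroup V₂] [Module (M₂ → ℝ) V₂]
    [AddCommGroup V] [Module (M₁ × M₂ → ℝ) V]
    (W : Warped M₁ V₁ M₂ V₂ V)

lemma br₂₁ (X₂ : V₂) (Y₁ : V₁) : W.Γ.bracket (W.L₂ X₂) (W.L₁ Y₁) = 0 := by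
  rw [← W.Γ.torsion, W.conn₂₁, W.conn₁₂, sub_self]

lemma br_mix (ζ₁ X₁ : V₁) (ζ₂ X₂ : V₂) :
    W.Γ.bracket (W.L₁ ζ₁ + W.L₂ ζ₂) (W.L₁ X₁ + W.L₂ X₂)
      = W.L₁ (W.Γ₁.bracket ζ₁ X₁) + W.L₂ (W.Γ₂.bracket ζ₂ X₂) := by
  rw [W.Γ.bracket_addl, W.Γ.bracket_addr, W.Γ.bracket_addr,
      W.br₁, W.br₂, W.br₁₂, W.br₂₁]
  abel

lemma act_pr₁ (ζ₁ : V₁) (ζ₂ : V₂) (a : M₁ → ℝ) :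
    W.Γ.act (W.L₁ ζ₁ + W.L₂ ζ₂) (fun p => a p.1) = fun p => W.Γ₁.act ζ₁ a p.1 := by
  rw [W.Γ.act_addl, W.act₁, W.act₂₁, add_zero]

lemma act_mix (ζ₁ : V₁) (ζ₂ : V₂) (a : M₁ → ℝ) (b : M₂ → ℝ) :
    W.Γ.act (W.L₁ ζ₁ + W.L₂ ζ₂) (fun p => a p.1 * b p.2)
      = fun p => W.Γ₁.act ζ₁ a p.1 * b p.2 + a p.1 * W.Γ₂.act ζ₂ b p.2 := by
  have h : (fun p : M₁ × M₂ => a p.1 * b p.2)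
      = (fun p : M₁ × M₂ => a p.1) * (fun p : M₁ × M₂ => b p.2) := rfl
  rw [h, W.Γ.act_addl, W.Γ.act_mul, W.Γ.act_mul, W.act₁, W.act₂, W.act₁₂, W.act₂₁]
  funext p
  simp [Pi.add_apply, Pi.mul_apply]

lemma lieg_lift (ζ₁ X₁ Y₁ : V₁) (ζ₂ X₂ Y₂ : V₂) :
    W.Γ.lieg (W.L₁ ζ₁ + W.L₂ ζ₂) (W.L₁ X₁ + W.L₂ X₂) (W.L₁ Y₁ + W.L₂ Y₂)
      = fun p => W.Γ₁.lieg ζ₁ X₁ Y₁ p.1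
          + (W.f p.1)^2 * W.Γ₂.lieg ζ₂ X₂ Y₂ p.2
          + 2 * W.f p.1 * W.Γ₁.act ζ₁ W.f p.1 * W.Γ₂.g X₂ Y₂ p.2 := by
  unfold VFC.lieg VFC.lieT
  rw [W.br_mix, W.br_mix, W.metric, W.metric, W.metric]
  have hm : (fun p : M₁ × M₂ => W.Γ₁.g X₁ Y₁ p.1 + (W.f p.1)^2 * W.Γ₂.g X₂ Y₂ p.2)
      = (fun p : M₁ × M₂ => (W.Γ₁.g X₁ Y₁) p.1)
        + fun p : M₁ × M₂ => (W.f ^ 2) p.1 * (W.Γ₂.g X₂ Y₂) p.2 := rfl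
  rw [hm, W.Γ.act_add, W.act_pr₁, W.act_mix]
  have hsq : W.Γ₁.act ζ₁ (W.f ^ 2) = 2 * W.f * W.Γ₁.act ζ₁ W.f := by
    rw [sq, W.Γ₁.act_mul]; ring
  funext p
  simp only [Pi.sub_apply, Pi.add_apply, Pi.mul_apply, Pi.pow_apply, hsq,
    Pi.ofNat_apply]
  push_cast
  ring

end Warped

/-- the second Lie derivative of the warped metric:
`(L_ζ L_ζ g)(X,Y) = (L¹L¹g₁)(X₁,Y₁) + f²(L²L²g₂)(X₂,Y₂)
+ 4 f ζ₁(f)(L²g₂)(X₂,Y₂) + 2 f ζ₁(ζ₁(f)) g₂(X₂,Y₂) + 2 (ζ₁(f))² g₂(X₂,Y₂)`. -/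
theorem warped_lie2g {M₁ V₁ M₂ V₂ V : Type}
    [AddCommGroup V₁] [Module (M₁ → ℝ) V₁]
    [AddCommGroup V₂] [Module (M₂ → ℝ) V₂]
    [AddCommGroup V] [Module (M₁ × M₂ → ℝ) V]
    (W : Warped M₁ V₁ M₂ V₂ V) (ζ₁ X₁ Y₁ : V₁) (ζ₂ X₂ Y₂ : V₂) :
    W.Γ.lie2g (W.L₁ ζ₁ + W.L₂ ζ₂) (W.L₁ X₁ + W.L₂ X₂) (W.L₁ Y₁ + W.L₂ Y₂)
      = fun p => W.Γ₁.lie2g ζ₁ X₁ Y₁ p.1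
          + (W.f p.1)^2 * W.Γ₂.lie2g ζ₂ X₂ Y₂ p.2
          + 4 * W.f p.1 * W.Γ₁.act ζ₁ W.f p.1 * W.Γ₂.lieg ζ₂ X₂ Y₂ p.2
          + 2 * W.f p.1 * W.Γ₁.act ζ₁ (W.Γ₁.act ζ₁ W.f) p.1 * W.Γ₂.g X₂ Y₂ p.2
          + 2 * (W.Γ₁.act ζ₁ W.f p.1)^2 * W.Γ₂.g X₂ Y₂ p.2 := by
  show W.Γ.lieT _ (W.Γ.lieg _) _ _ = _
  unfold VFC.lieT
  rw [W.br_mix, W.br_mix, W.lieg_lift, W.lieg_lift, W.lieg_lift]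
  have hdec : (fun p : M₁ × M₂ => W.Γ₁.lieg ζ₁ X₁ Y₁ p.1
          + (W.f p.1)^2 * W.Γ₂.lieg ζ₂ X₂ Y₂ p.2
          + 2 * W.f p.1 * W.Γ₁.act ζ₁ W.f p.1 * W.Γ₂.g X₂ Y₂ p.2)
      = ((fun p : M₁ × M₂ => (W.Γ₁.lieg ζ₁ X₁ Y₁) p.1)
          + fun p : M₁ × M₂ => (W.f ^ 2) p.1 * (W.Γ₂.lieg ζ₂ X₂ Y₂) p.2)
        + fun p : M₁ × M₂ => (2 * W.f * W.Γ₁.act ζ₁ W.f) p.1 * (W.Γ₂.g X₂ Y₂) p.2 := rfl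
  rw [hdec, W.Γ.act_add, W.Γ.act_add, W.act_pr₁, W.act_mix, W.act_mix]
  have hsq : W.Γ₁.act ζ₁ (W.f ^ 2) = 2 * W.f * W.Γ₁.act ζ₁ W.f := by
    rw [sq, W.Γ₁.act_mul]; ring
  have h3 : W.Γ₁.act ζ₁ (2 * W.f * W.Γ₁.act ζ₁ W.f)
      = 2 * (W.Γ₁.act ζ₁ W.f * W.Γ₁.act ζ₁ W.f
          + W.f * W.Γ₁.act ζ₁ (W.Γ₁.act ζ₁ W.f)) := by
    have h2 : (2 : M₁ → ℝ) * W.f * W.Γ₁.act ζ₁ W.f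
        = W.f * W.Γ₁.act ζ₁ W.f + W.f * W.Γ₁.act ζ₁ W.f := by ring
    rw [h2, W.Γ₁.act_add, W.Γ₁.act_mul]; ring
  funext p
  simp only [Pi.sub_apply, Pi.add_apply, Pi.mul_apply, Pi.pow_apply, hsq, h3,
    Pi.ofNat_apply, VFC.lie2g, VFC.lieg, VFC.lieT]
  ring
end

section
/- If ζ₁ is a 2-Killing vector field on M₁, ζ₂ is a 2-Killing vector field on M₂, and ζ₁(f) = 0, then ζ = (ζ₁,ζ₂) is a 2-Killing vector field on the warped product M₁ ×_f M₂. -/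
namespace Warped
variable {M₁ V₁ M₂ V₂ V : Type}
    [AddCommGroup V₁] [Module (M₁ → ℝ) V₁]
    [AddCommGroup V₂] [Module (M₂ → ℝ) V₂]
    [AddCommGroup V] [Module (M₁ × M₂ → ℝ) V]

/-- `ζ` is a Killing field on the warped product: `L_ζ g` vanishes.  Since
`L_ζ g` is tensorial and the lifted fields span the tangent spaces, it
suffices to test it on sums of lifted fields. -/
def IsKillingW (W : Warped M₁ V₁ M₂ V₂ V) (ζ : V) : Prop :=
  ∀ X₁ X₂ Y₁ Y₂, W.Γ.lieg ζ (W.L₁ X₁ + W.L₂ X₂) (W.L₁ Y₁ + W.L₂ Y₂) = 0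

/-- `ζ` is a 2-Killing field on the warped product: `L_ζ L_ζ g` vanishes. -/
def Is2KillingW (W : Warped M₁ V₁ M₂ V₂ V) (ζ : V) : Prop :=
  ∀ X₁ X₂ Y₁ Y₂, W.Γ.lie2g ζ (W.L₁ X₁ + W.L₂ X₂) (W.L₁ Y₁ + W.L₂ Y₂) = 0

end Warped

namespace VFC
variable {M V : Type} [AddCommGroup V] [Module (M → ℝ) V]

lemma bracket_eq (Γ : VFC M V) (X Y : V) : Γ.bracket X Y = Γ.D X Y - Γ.D Y X :=
  (Γ.torsion X Y).symm

lemma bracket_antisymm (Γ : VFC M V) (X Y : V) : Γ.bracket X Y = - Γ.bracket Y X := by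
  simp only [bracket_eq]; abel

lemma bracket_add_add (Γ : VFC M V) (A B C D' : V) :
    Γ.bracket (A + B) (C + D')
      = Γ.bracket A C + Γ.bracket A D' + Γ.bracket B C + Γ.bracket B D' := by
  simp only [bracket_eq, Γ.D_addl, Γ.D_addr]; abel

end VFC

namespace Warped
variable {M₁ V₁ M₂ V₂ V : Type}
    [AddCommGroup V₁] [Module (M₁ → ℝ) V₁]
    [AddCommGroup V₂] [Module (M₂ → ℝ) V₂]
    [AddCommGroup V] [Module (M₁ × M₂ → ℝ) V]

lemma bracket_lift (W : Warped M₁ V₁ M₂ V₂ V) (ζ₁ X₁ : V₁) (ζ₂ X₂ : V₂) :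
    W.Γ.bracket (W.L₁ ζ₁ + W.L₂ ζ₂) (W.L₁ X₁ + W.L₂ X₂)
      = W.L₁ (W.Γ₁.bracket ζ₁ X₁) + W.L₂ (W.Γ₂.bracket ζ₂ X₂) := by
  rw [W.Γ.bracket_add_add, W.br₁, W.br₂, W.br₁₂,
    W.Γ.bracket_antisymm (W.L₂ ζ₂) (W.L₁ X₁), W.br₁₂]
  abel

lemma act_split (W : Warped M₁ V₁ M₂ V₂ V) (ζ₁ : V₁) (ζ₂ : V₂)
    (hf : W.Γ₁.act ζ₁ W.f = 0) (a : M₁ → ℝ) (b : M₂ → ℝ) :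
    W.Γ.act (W.L₁ ζ₁ + W.L₂ ζ₂) (fun p => a p.1 + (W.f p.1) ^ 2 * b p.2)
      = fun p => W.Γ₁.act ζ₁ a p.1 + (W.f p.1) ^ 2 * W.Γ₂.act ζ₂ b p.2 := by
  have hff : W.Γ₁.act ζ₁ (W.f * W.f) = 0 := by
    rw [W.Γ₁.act_mul, hf]; funext x; simp
  have hfun : (fun p : M₁ × M₂ => a p.1 + (W.f p.1) ^ 2 * b p.2)
      = (fun p : M₁ × M₂ => a p.1)
        + (fun p : M₁ × M₂ => (W.f * W.f) p.1) * (fun p : M₁ × M₂ => b p.2) := by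
    funext p
    simp [Pi.add_apply, Pi.mul_apply, pow_two]
  rw [hfun, W.Γ.act_addl, W.Γ.act_add, W.Γ.act_add, W.Γ.act_mul, W.Γ.act_mul,
    W.act₁ ζ₁ a, W.act₁₂ ζ₁ b, W.act₂₁ ζ₂ a, W.act₂ ζ₂ b, W.act₁ ζ₁ (W.f * W.f),
    W.act₂₁ ζ₂ (W.f * W.f), hff]
  funext p
  simp [Pi.add_apply, Pi.mul_apply, pow_two]

lemma lieT_split (W : Warped M₁ V₁ M₂ V₂ V) (ζ₁ : V₁) (ζ₂ : V₂)
    (hf : W.Γ₁.act ζ₁ W.f = 0)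
    (T : V → V → M₁ × M₂ → ℝ) (T₁ : V₁ → V₁ → M₁ → ℝ) (T₂ : V₂ → V₂ → M₂ → ℝ)
    (hT : ∀ X₁ X₂ Y₁ Y₂, T (W.L₁ X₁ + W.L₂ X₂) (W.L₁ Y₁ + W.L₂ Y₂)
      = fun p => T₁ X₁ Y₁ p.1 + (W.f p.1) ^ 2 * T₂ X₂ Y₂ p.2)
    (X₁ : V₁) (X₂ : V₂) (Y₁ : V₁) (Y₂ : V₂) :
    W.Γ.lieT (W.L₁ ζ₁ + W.L₂ ζ₂) T (W.L₁ X₁ + W.L₂ X₂) (W.L₁ Y₁ + W.L₂ Y₂)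
      = fun p => W.Γ₁.lieT ζ₁ T₁ X₁ Y₁ p.1 + (W.f p.1) ^ 2 * W.Γ₂.lieT ζ₂ T₂ X₂ Y₂ p.2 := by
  unfold VFC.lieT
  rw [hT, W.bracket_lift ζ₁ X₁ ζ₂ X₂, W.bracket_lift ζ₁ Y₁ ζ₂ Y₂, hT, hT,
    W.act_split ζ₁ ζ₂ hf]
  funext p
  simp only [Pi.sub_apply]
  ring

end Warped

/-- if `ζ₁`, `ζ₂` are 2-Killing on the factors and `ζ₁(f) = 0`,
then `ζ = (ζ₁,ζ₂)` is 2-Killing on the warped product. -/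
theorem sum_lift_two_killing {M₁ V₁ M₂ V₂ V : Type}
    [AddCommGroup V₁] [Module (M₁ → ℝ) V₁]
    [AddCommGroup V₂] [Module (M₂ → ℝ) V₂]
    [AddCommGroup V] [Module (M₁ × M₂ → ℝ) V]
    (W : Warped M₁ V₁ M₂ V₂ V) (ζ₁ : V₁) (ζ₂ : V₂)
    (h₁ : W.Γ₁.Is2Killing ζ₁) (h₂ : W.Γ₂.Is2Killing ζ₂)
    (hf : W.Γ₁.act ζ₁ W.f = 0) :
    W.Is2KillingW (W.L₁ ζ₁ + W.L₂ ζ₂) := by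
  intro X₁ X₂ Y₁ Y₂
  have hl : ∀ (X₁ : V₁) (X₂ : V₂) (Y₁ : V₁) (Y₂ : V₂),
      W.Γ.lieg (W.L₁ ζ₁ + W.L₂ ζ₂) (W.L₁ X₁ + W.L₂ X₂) (W.L₁ Y₁ + W.L₂ Y₂)
        = fun p => W.Γ₁.lieg ζ₁ X₁ Y₁ p.1 + (W.f p.1) ^ 2 * W.Γ₂.lieg ζ₂ X₂ Y₂ p.2 :=
    fun X₁ X₂ Y₁ Y₂ => W.lieT_split ζ₁ ζ₂ hf W.Γ.g W.Γ₁.g W.Γ₂.g W.metric X₁ X₂ Y₁ Y₂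
  have h2 := W.lieT_split ζ₁ ζ₂ hf (W.Γ.lieg (W.L₁ ζ₁ + W.L₂ ζ₂))
    (W.Γ₁.lieg ζ₁) (W.Γ₂.lieg ζ₂) hl X₁ X₂ Y₁ Y₂
  show W.Γ.lieT (W.L₁ ζ₁ + W.L₂ ζ₂) (W.Γ.lieg (W.L₁ ζ₁ + W.L₂ ζ₂)) _ _ = 0
  rw [h2]
  funext p
  have e₁ : W.Γ₁.lieT ζ₁ (W.Γ₁.lieg ζ₁) X₁ Y₁ = 0 := h₁ X₁ Y₁
  have e₂ : W.Γ₂.lieT ζ₂ (W.Γ₂.lieg ζ₂) X₂ Y₂ = 0 := h₂ X₂ Y₂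
  simp [e₁, e₂]
end

section
/- If ζ₂ is a 2-Killing vector field on M₂, then the lift ζ = (0, ζ₂) is a 2-Killing vector field on the warped product M₁ ×_f M₂. -/
section Aux

lemma VFC.g_zerol {M V : Type} [AddCommGroup V] [Module (M → ℝ) V]
    (Γ : VFC M V) (Y : V) : Γ.g 0 Y = 0 := by
  have h := Γ.g_addl 0 0 Y
  rw [add_zero] at h
  have h2 : Γ.g 0 Y + Γ.g 0 Y = Γ.g 0 Y + 0 := by rw [add_zero]; exact h.symm
  exact (add_left_cancel h2)

lemma VFC.g_zeror {M V : Type} [AddCommGroup V] [Module (M → ℝ) V]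
    (Γ : VFC M V) (Y : V) : Γ.g Y 0 = 0 := by
  rw [Γ.g_symm]; exact Γ.g_zerol Y

variable {M₁ V₁ M₂ V₂ V : Type}
    [AddCommGroup V₁] [Module (M₁ → ℝ) V₁]
    [AddCommGroup V₂] [Module (M₂ → ℝ) V₂]
    [AddCommGroup V] [Module (M₁ × M₂ → ℝ) V]
    (W : Warped M₁ V₁ M₂ V₂ V) (ζ₂ : V₂)

lemma aux_br (X₁ : V₁) (X₂ : V₂) :
    W.Γ.bracket (W.L₂ ζ₂) (W.L₁ X₁ + W.L₂ X₂) = W.L₂ (W.Γ₂.bracket ζ₂ X₂) := by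
  rw [← W.Γ.torsion, W.Γ.D_addr, W.Γ.D_addl, W.conn₂₁, W.conn₁₂]
  have h2 := W.Γ.torsion (W.L₂ ζ₂) (W.L₂ X₂)
  rw [W.br₂] at h2
  rw [← h2]
  abel

lemma aux_act2 (b : M₂ → ℝ) :
    W.Γ.act (W.L₂ ζ₂) (fun p => (W.f p.1)^2 * b p.2)
      = fun p => (W.f p.1)^2 * W.Γ₂.act ζ₂ b p.2 := by
  have h1 : (fun p : M₁ × M₂ => (W.f p.1)^2 * b p.2)
      = (fun p : M₁ × M₂ => (W.f ^ 2) p.1) * (fun p : M₁ × M₂ => b p.2) := by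
    funext p; simp
  rw [h1, W.Γ.act_mul, W.act₂₁, W.act₂]
  funext p; simp

lemma aux_act (a : M₁ → ℝ) (b : M₂ → ℝ) :
    W.Γ.act (W.L₂ ζ₂) (fun p => a p.1 + (W.f p.1)^2 * b p.2)
      = fun p => (W.f p.1)^2 * W.Γ₂.act ζ₂ b p.2 := by
  have h1 : (fun p : M₁ × M₂ => a p.1 + (W.f p.1)^2 * b p.2)
      = (fun p : M₁ × M₂ => a p.1) + (fun p : M₁ × M₂ => (W.f p.1)^2 * b p.2) := by
    funext p; simp
  rw [h1, W.Γ.act_add, W.act₂₁, aux_act2]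
  funext p; simp

lemma aux_metric_l (X₂ : V₂) (Y₁ : V₁) (Y₂ : V₂) :
    W.Γ.g (W.L₂ X₂) (W.L₁ Y₁ + W.L₂ Y₂)
      = fun p => (W.f p.1)^2 * W.Γ₂.g X₂ Y₂ p.2 := by
  have h := W.metric 0 X₂ Y₁ Y₂
  rw [map_zero, zero_add] at h
  rw [h]; funext p; rw [W.Γ₁.g_zerol]; simp

lemma aux_metric_r (X₁ : V₁) (X₂ : V₂) (Y₂ : V₂) :
    W.Γ.g (W.L₁ X₁ + W.L₂ X₂) (W.L₂ Y₂)
      = fun p => (W.f p.1)^2 * W.Γ₂.g X₂ Y₂ p.2 := by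
  have h := W.metric X₁ X₂ 0 Y₂
  rw [map_zero, zero_add] at h
  rw [h]; funext p; rw [W.Γ₁.g_zeror]; simp

lemma aux_lieg (X₁ : V₁) (X₂ : V₂) (Y₁ : V₁) (Y₂ : V₂) :
    W.Γ.lieg (W.L₂ ζ₂) (W.L₁ X₁ + W.L₂ X₂) (W.L₁ Y₁ + W.L₂ Y₂)
      = fun p => (W.f p.1)^2 * W.Γ₂.lieg ζ₂ X₂ Y₂ p.2 := by
  unfold VFC.lieg VFC.lieT
  rw [aux_br, aux_br, W.metric, aux_act]
  have h1 := aux_metric_l W (W.Γ₂.bracket ζ₂ X₂) Y₁ Y₂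
  have h2 : W.Γ.g (W.L₁ X₁ + W.L₂ X₂) (W.L₂ (W.Γ₂.bracket ζ₂ Y₂))
      = fun p => (W.f p.1)^2 * W.Γ₂.g X₂ (W.Γ₂.bracket ζ₂ Y₂) p.2 :=
    aux_metric_r W X₁ X₂ _
  rw [h1, h2]
  funext p; simp
  ring

lemma aux_lieg' (X₂ : V₂) (Y₁ : V₁) (Y₂ : V₂) :
    W.Γ.lieg (W.L₂ ζ₂) (W.L₂ X₂) (W.L₁ Y₁ + W.L₂ Y₂)
      = fun p => (W.f p.1)^2 * W.Γ₂.lieg ζ₂ X₂ Y₂ p.2 := by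
  have h := aux_lieg W ζ₂ 0 X₂ Y₁ Y₂
  rwa [map_zero, zero_add] at h

lemma aux_lieg'' (X₁ : V₁) (X₂ : V₂) (Y₂ : V₂) :
    W.Γ.lieg (W.L₂ ζ₂) (W.L₁ X₁ + W.L₂ X₂) (W.L₂ Y₂)
      = fun p => (W.f p.1)^2 * W.Γ₂.lieg ζ₂ X₂ Y₂ p.2 := by
  have h := aux_lieg W ζ₂ X₁ X₂ 0 Y₂
  rwa [map_zero, zero_add] at h

end Aux

/-- if `ζ₂` is 2-Killing on `M₂`, then its lift `(0,ζ₂)` is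
2-Killing on the warped product. -/
theorem lift_fiber_two_killing {M₁ V₁ M₂ V₂ V : Type}
    [AddCommGroup V₁] [Module (M₁ → ℝ) V₁]
    [AddCommGroup V₂] [Module (M₂ → ℝ) V₂]
    [AddCommGroup V] [Module (M₁ × M₂ → ℝ) V]
    (W : Warped M₁ V₁ M₂ V₂ V) (ζ₂ : V₂) (h : W.Γ₂.Is2Killing ζ₂) :
    W.Is2KillingW (W.L₂ ζ₂) := by
  intro X₁ X₂ Y₁ Y₂
  unfold VFC.lie2g VFC.lieT
  rw [aux_br, aux_br, aux_lieg, aux_lieg', aux_lieg'', aux_act2]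
  funext p
  have hp := congrFun (h X₂ Y₂) p.2
  simp only [VFC.lie2g, VFC.lieT, Pi.sub_apply, Pi.zero_apply] at hp ⊢
  linear_combination (W.f p.1)^2 * hp
end
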